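/- arXiv:2504.09526 — 4 statements merged into one kernel-verified Lean document; each statement's English description precedes it below -/
import Mathlib

section
/- Let λ > −1/2 and define K̂_n^λ = 2^{n−1} Γ(2λ+1) Γ(n+λ) / ( Γ(λ+1) Γ(n+2λ) ) and Θ_λ = √(2π) Γ(2λ+1) / Γ(λ+1). Then (n+1)! · K̂_{n+1}^λ is asymptotically equivalent to Θ_λ · n^{3/2−λ} · (2n/e)^n as n → ∞; that is, the ratio ( (n+1)! · K̂_{n+1}^λ ) / ( Θ_λ · n^{3/2−λ} · (2n/e)^n ) tends to 1 as n → ∞. -/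
/-- Leading coefficient `K̂_n^λ = 2^{n−1} Γ(2λ+1) Γ(n+λ) / (Γ(λ+1) Γ(n+2λ))`. -/
noncomputable def Khat (lam : ℝ) (n : ℕ) : ℝ :=
  (2 : ℝ) ^ ((n : ℤ) - 1) * Real.Gamma (2*lam + 1) * Real.Gamma ((n : ℝ) + lam) /
    (Real.Gamma (lam + 1) * Real.Gamma ((n : ℝ) + 2*lam))

/-- `Θ_λ = √(2π) Γ(2λ+1) / Γ(λ+1)`. -/
noncomputable def Theta (lam : ℝ) : ℝ :=
  Real.sqrt (2 * Real.pi) * Real.Gamma (2*lam + 1) / Real.Gamma (lam + 1)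

/-!
Euler's limit formula `Γ(s) = lim n^s n! / (s (s+1) ⋯ (s+n))` gives `Γ(n + a) ~ n! n^(a-1)`
for `a > 0`, hence `Γ(n + 1 + λ) / Γ(n + 1 + 2λ) ~ n^(-λ)`; both shifts are positive since
`λ > -1/2`. Stirling's formula gives `(n+1)! ~ √(2π) n^(3/2) (n/e)^n`, and multiplying the two
equivalences yields the claim.
-/

open Filter Asymptotics Real
open scoped Nat

theorem Real.Gamma_nat_add_eq_mul_prod {a : ℝ} (ha : 0 < a) (n : ℕ) :
    Gamma (n + a) = Gamma a * ∏ j ∈ Finset.range n, (a + j) := by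
  induction n with
  | zero => simp
  | succ n ih =>
    rw [Finset.prod_range_succ, ← mul_assoc, ← ih, mul_comm, Nat.cast_succ,
      add_right_comm, Gamma_add_one (by positivity), add_comm a]

theorem Real.Gamma_nat_add_isEquivalent {a : ℝ} (ha : 0 < a) :
    (fun n : ℕ ↦ Gamma (n + a)) ~[atTop] fun n ↦ n ! * (n : ℝ) ^ (a - 1) := by
  have hG : Gamma a ≠ 0 := (Gamma_pos_of_pos ha).ne'
  have h := ((tendsto_const_nhds (x := Gamma a)).div (GammaSeq_tendsto_Gamma a) hG).mul
    (tendsto_natCast_div_add_atTop a)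
  rw [div_self hG, one_mul] at h
  refine isEquivalent_of_tendsto_one (h.congr' ?_)
  filter_upwards [eventually_gt_atTop 0] with n hn
  have hn' : (0 : ℝ) < n := by exact_mod_cast hn
  simp only [Pi.div_apply, GammaSeq]
  rw [Finset.prod_range_succ, rpow_sub_one hn'.ne', Gamma_nat_add_eq_mul_prod ha]
  field_simp
  ring

theorem Real.Gamma_nat_add_div_Gamma_nat_add_isEquivalent {a b : ℝ} (ha : 0 < a)
    (hb : 0 < b) :
    (fun n : ℕ ↦ Gamma (n + a) / Gamma (n + b)) ~[atTop] fun n ↦ (n : ℝ) ^ (a - b) := by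
  refine ((Gamma_nat_add_isEquivalent ha).div (Gamma_nat_add_isEquivalent hb)).congr_right ?_
  filter_upwards [eventually_gt_atTop 0] with n hn
  have hn' : (0 : ℝ) < n := by exact_mod_cast hn
  have : (0 : ℝ) < n ! := by positivity
  simp only [Pi.div_apply]
  rw [rpow_sub_one hn'.ne', rpow_sub_one hn'.ne', rpow_sub hn']
  field_simp

theorem factorial_succ_isEquivalent_stirling :
    (fun n : ℕ ↦ ((n + 1) ! : ℝ)) ~[atTop]
      fun n ↦ √(2 * π) * (n : ℝ) ^ (3 / 2 : ℝ) * (n / exp 1) ^ n := by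
  have hlin : (fun n : ℕ ↦ (n : ℝ) + 1) ~[atTop] fun n ↦ (n : ℝ) :=
    IsEquivalent.refl.add_const_of_norm_tendsto_atTop
      (tendsto_norm_atTop_atTop.comp tendsto_natCast_atTop_atTop)
  refine (hlin.mul Stirling.factorial_isEquivalent_stirling).congr_left ?_ |>.congr_right ?_
  · refine Eventually.of_forall fun n ↦ ?_
    simp [Nat.factorial_succ]
  · filter_upwards [eventually_gt_atTop 0] with n hn
    have hn' : (0 : ℝ) < n := by exact_mod_cast hn
    simp only [Pi.mul_apply]
    rw [show (3 / 2 : ℝ) = 1 + 1 / 2 by norm_num, rpow_add hn', rpow_one, ← sqrt_eq_rpow,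
      show 2 * (n : ℝ) * π = 2 * π * n by ring, sqrt_mul (by positivity)]
    ring

theorem factorial_mul_Khat_succ (lam : ℝ) (n : ℕ) :
    (n + 1)! * Khat lam (n + 1) = Gamma (2 * lam + 1) / Gamma (lam + 1) * 2 ^ n *
      ((n + 1)! * (Gamma (n + (lam + 1)) / Gamma (n + (2 * lam + 1)))) := by
  simp only [Khat, Nat.cast_add, Nat.cast_one, add_sub_cancel_right,
    zpow_natCast, add_assoc, add_comm 1 lam, add_comm 1 (2 * lam)]
  ring

theorem Theta_pos {lam : ℝ} (hlam : -1/2 < lam) : 0 < Theta lam := by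
  have := Gamma_pos_of_pos (show 0 < 2 * lam + 1 by linarith)
  have := Gamma_pos_of_pos (show 0 < lam + 1 by linarith)
  unfold Theta
  positivity

theorem stmt2 (lam : ℝ) (hlam : -1/2 < lam) :
    Filter.Tendsto
      (fun n : ℕ =>
        ((Nat.factorial (n + 1) : ℝ) * Khat lam (n + 1)) /
          (Theta lam * (n : ℝ) ^ ((3 : ℝ)/2 - lam) * (2 * (n : ℝ) / Real.exp 1) ^ n))
      Filter.atTop (nhds 1) := by
  have hequiv := (IsEquivalent.refl
      (u := fun n : ℕ ↦ Gamma (2 * lam + 1) / Gamma (lam + 1) * 2 ^ n)).mul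
    (factorial_succ_isEquivalent_stirling.mul
      (Gamma_nat_add_div_Gamma_nat_add_isEquivalent (a := lam + 1) (b := 2 * lam + 1)
        (by linarith) (by linarith)))
  refine (isEquivalent_iff_tendsto_one ?_).mp ((hequiv.congr_left ?_).congr_right ?_)
  · filter_upwards [eventually_gt_atTop 0] with n hn
    have := Theta_pos hlam
    positivity
  · exact Eventually.of_forall fun n ↦ (factorial_mul_Khat_succ lam n).symm
  · filter_upwards [eventually_gt_atTop 0] with n hn
    have hn' : (0 : ℝ) < n := by exact_mod_cast hn
    simp only [Pi.mul_apply, Theta]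
    rw [show (3 / 2 : ℝ) - lam = 3 / 2 + (lam + 1 - (2 * lam + 1)) by ring, rpow_add hn',
      mul_div_assoc 2, mul_pow]
    ring
end

section
/- Let (k_m)_{m≥1} be positive integers with k_m → ∞ as m → ∞, k_m = o(m), and k_m^3 = O(m). Then there exist a constant C > 0 and M ∈ ℕ such that for all m ≥ M, | log( (m + k_m)! / k_m! ) − ( m log m + (k_m + 1/2) log(m / k_m) + k_m − m − 1/(4 k_m) − k_m^2 / (2m) ) | ≤ C · max( k_m^3 / m^2 , 1 / k_m ). Equivalently, the falling factorial (n)_m with n = m + k_m satisfies (n)_m = m^m (m/k_m)^{k_m + 1/2} e^{ k_m − m − 1/(4 k_m) − k_m^2/(2m) } · exp( O( max( k_m^3/m^2, 1/k_m ) ) ) as m → ∞. -/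
/-!
Write `log n! = log s(n) + log (2n) / 2 + n log n - n`, where `s` is Mathlib's Stirling sequence.
Robbins' bound `log s(n) - log s(n + 1) ≤ 1 / (12 n (n + 1))` telescopes, so `log s(k + m)` and
`log s(k)` differ by at most `1 / (12 k)`. With `log (m + k) = log m + log (1 + k / m)` the rest of
`log ((m + k)! / k!)` is the claimed main term plus `(m + k + 1/2) log (1 + k / m) - k`, which
`k / (m + k) ≤ log (1 + k / m) ≤ k / m` bounds by `2 k² / m`. Finally `k³ = O(m)` turns every
`k² / m` (including the one in the statement) into `O(1 / k)`.
-/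

open Asymptotics Filter Real

namespace Stirling

theorem log_stirlingSeq_sub_log_stirlingSeq_add_le {n : ℕ} (hn : n ≠ 0) (j : ℕ) :
    log (stirlingSeq n) - log (stirlingSeq (n + j)) ≤ 1 / (12 * n) - 1 / (12 * (n + j : ℕ)) := by
  induction j with
  | zero => simp
  | succ j ih =>
    have hnj : ((n + j : ℕ) : ℝ) ≠ 0 := by positivity
    have robbins := log_stirlingSeq_sdiff_le (n + j)
    have htelescope : (1 : ℝ) / (12 * (n + j : ℕ) * ((n + j : ℕ) + 1)) =
        1 / (12 * (n + j : ℕ)) - 1 / (12 * (n + j + 1 : ℕ)) := by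
      push_cast at hnj ⊢
      field_simp
      ring
    rw [← add_assoc]
    linarith

theorem log_stirlingSeq_add_le {n : ℕ} (hn : n ≠ 0) (j : ℕ) :
    log (stirlingSeq (n + j)) ≤ log (stirlingSeq n) := by
  obtain ⟨n, rfl⟩ := Nat.exists_eq_succ_of_ne_zero hn
  simpa [Nat.succ_add] using log_stirlingSeq'_antitone (Nat.le_add_right n j)

theorem abs_log_stirlingSeq_add_sub_le {n : ℕ} (hn : n ≠ 0) (j : ℕ) :
    |log (stirlingSeq (n + j)) - log (stirlingSeq n)| ≤ 1 / (12 * n) := by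
  rw [abs_sub_comm, abs_of_nonneg (sub_nonneg.mpr (log_stirlingSeq_add_le hn j))]
  have : (0 : ℝ) ≤ 1 / (12 * (n + j : ℕ)) := by positivity
  linarith [log_stirlingSeq_sub_log_stirlingSeq_add_le hn j]

theorem log_factorial_eq (n : ℕ) :
    log n.factorial = log (stirlingSeq n) + log (2 * n) / 2 + n * log n - n := by
  rcases eq_or_ne n 0 with rfl | hn
  · simp
  rw [log_stirlingSeq_formula, log_div (by positivity) (exp_pos 1).ne', log_exp]
  ring

end Stirling

theorem abs_mul_log_one_add_div_sub_le {m k : ℝ} (hm : 0 < m) (hk : 1 ≤ k) :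
    |(m + k + 1 / 2) * log (1 + k / m) - k| ≤ 2 * k ^ 2 / m := by
  have hx : 0 < 1 + k / m := by positivity
  have hupper : log (1 + k / m) ≤ k / m := by linarith [log_le_sub_one_of_pos hx]
  have hlower : k / (m + k) ≤ log (1 + k / m) := by
    have := one_sub_inv_le_log_of_pos hx
    rwa [show 1 - (1 + k / m)⁻¹ = k / (m + k) by field_simp; ring] at this
  have hlog_nonneg : 0 ≤ log (1 + k / m) := by
    have : 0 ≤ k / m := div_nonneg (by linarith) hm.le
    exact log_nonneg (by linarith)
  rw [abs_le]
  constructor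
  · have h1 : m * (k / (m + k)) ≤ m * log (1 + k / m) := by gcongr
    have h2 : k - m * (k / (m + k)) ≤ 2 * k ^ 2 / m := by
      rw [show k - m * (k / (m + k)) = k ^ 2 / (m + k) by field_simp; ring]
      rw [div_le_div_iff₀ (by linarith) hm]
      nlinarith
    have h3 : 0 ≤ (k + 1 / 2) * log (1 + k / m) := mul_nonneg (by linarith) hlog_nonneg
    linarith
  · have h1 : (m + k + 1 / 2) * log (1 + k / m) ≤ (m + k + 1 / 2) * (k / m) := by gcongr
    have h2 : (m + k + 1 / 2) * (k / m) - k ≤ 2 * k ^ 2 / m := by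
      rw [show (m + k + 1 / 2) * (k / m) - k = (k ^ 2 + k / 2) / m by field_simp; ring]
      gcongr
      nlinarith
    linarith

theorem log_factorial_add_div_factorial_eq {m k : ℕ} (hm : m ≠ 0) (hk : k ≠ 0) :
    log ((m + k).factorial / k.factorial : ℝ) =
      (m * log m + (k + 1 / 2) * log (m / k) + k - m) +
        (log (Stirling.stirlingSeq (k + m)) - log (Stirling.stirlingSeq k)) +
        ((m + k + 1 / 2) * log (1 + k / m) - k) := by
  have hm' : (m : ℝ) ≠ 0 := by positivity
  have hk' : (k : ℝ) ≠ 0 := by positivity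
  have hsum : log ((m + k : ℕ) : ℝ) = log m + log (1 + k / m) := by
    rw [← log_mul hm' (by positivity)]
    congr 1
    push_cast
    field_simp
  have htwo : log (2 * (m + k : ℕ) : ℝ) - log (2 * k) = log m + log (1 + k / m) - log k := by
    rw [log_mul two_ne_zero (by positivity), log_mul two_ne_zero hk', hsum]
    ring
  rw [log_div (by positivity) (by positivity), Stirling.log_factorial_eq, Stirling.log_factorial_eq,
    log_div hm' hk', add_comm k m]
  push_cast at hsum htwo ⊢
  rw [hsum]
  linear_combination htwo / 2

theorem abs_log_factorial_add_div_factorial_sub_le {m k : ℕ} (hm : m ≠ 0) (hk : k ≠ 0) :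
    |log ((m + k).factorial / k.factorial : ℝ) - (m * log m + (k + 1 / 2) * log (m / k) + k - m)| ≤
      1 / (12 * k) + 2 * k ^ 2 / m := by
  rw [log_factorial_add_div_factorial_eq hm hk, add_assoc, add_sub_cancel_left]
  exact (abs_add_le _ _).trans (add_le_add (Stirling.abs_log_stirlingSeq_add_sub_le hk m)
    (abs_mul_log_one_add_div_sub_le (by positivity) (by exact_mod_cast Nat.one_le_iff_ne_zero.mpr hk)))

theorem stmt3_general (k : ℕ → ℕ) (hpos : ∀ m, 0 < k m)
    (hcube : (fun m => (k m : ℝ) ^ 3) =O[Filter.atTop] (fun m => (m : ℝ))) :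
    ∃ C > (0 : ℝ), ∃ M : ℕ, ∀ m ≥ M,
      |Real.log ((Nat.factorial (m + k m) : ℝ) / (Nat.factorial (k m) : ℝ)) -
          ((m : ℝ) * Real.log (m : ℝ) +
            ((k m : ℝ) + 1/2) * Real.log ((m : ℝ) / (k m : ℝ)) +
            (k m : ℝ) - (m : ℝ) - 1 / (4 * (k m : ℝ)) - (k m : ℝ)^2 / (2 * (m : ℝ)))| ≤
        C * max ((k m : ℝ)^3 / (m : ℝ)^2) (1 / (k m : ℝ)) := by
  obtain ⟨c, hc, hbound⟩ := hcube.exists_pos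
  obtain ⟨M, hM⟩ := eventually_atTop.mp hbound.bound
  refine ⟨1 / 3 + 5 / 2 * c, by positivity, max M 1, fun m hm => ?_⟩
  have hm0 : m ≠ 0 := by omega
  have hk0 : k m ≠ 0 := (hpos m).ne'
  set K : ℝ := (k m : ℝ)
  have hK : 0 < K := by positivity
  have hmR : (0 : ℝ) < m := by positivity
  have hcube_m : K ^ 3 ≤ c * m := by
    simpa [abs_of_pos hK, abs_of_pos hmR] using hM m (le_of_max_le_left hm)
  have hsq : K ^ 2 / m ≤ c / K := by
    rw [div_le_div_iff₀ hmR hK]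
    linarith
  have hstirling := abs_log_factorial_add_div_factorial_sub_le hm0 hk0
  calc _ = |(log ((m + k m).factorial / (k m).factorial : ℝ) -
          (m * log m + (K + 1 / 2) * log (m / K) + K - m)) + (1 / (4 * K) + K ^ 2 / (2 * m))| := by
        congr 1; ring
    _ ≤ (1 / (12 * K) + 2 * K ^ 2 / m) + (1 / (4 * K) + K ^ 2 / (2 * m)) := by
        grw [abs_add_le, hstirling, abs_of_pos (by positivity : 0 < 1 / (4 * K) + K ^ 2 / (2 * m))]
    _ = 1 / 3 * (1 / K) + 5 / 2 * (K ^ 2 / m) := by ring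
    _ ≤ 1 / 3 * (1 / K) + 5 / 2 * (c / K) := by grw [hsq]
    _ = (1 / 3 + 5 / 2 * c) * (1 / K) := by ring
    _ ≤ _ := by gcongr; exact le_max_right _ _

theorem stmt3 (k : ℕ → ℕ) (hpos : ∀ m, 0 < k m)
    (htend : Filter.Tendsto k Filter.atTop Filter.atTop)
    (hsmall : (fun m => (k m : ℝ)) =o[Filter.atTop] (fun m => (m : ℝ)))
    (hcube : (fun m => (k m : ℝ) ^ 3) =O[Filter.atTop] (fun m => (m : ℝ))) :
    ∃ C > (0 : ℝ), ∃ M : ℕ, ∀ m ≥ M,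
      |Real.log ((Nat.factorial (m + k m) : ℝ) / (Nat.factorial (k m) : ℝ)) -
          ((m : ℝ) * Real.log (m : ℝ) +
            ((k m : ℝ) + 1/2) * Real.log ((m : ℝ) / (k m : ℝ)) +
            (k m : ℝ) - (m : ℝ) - 1 / (4 * (k m : ℝ)) - (k m : ℝ)^2 / (2 * (m : ℝ)))| ≤
        C * max ((k m : ℝ)^3 / (m : ℝ)^2) (1 / (k m : ℝ)) :=
  stmt3_general k hpos hcube
end

section
/- The function T1(λ) = (1 + 2λ)^{−1/2 − 2λ} is strictly concave on the open interval (−1/2, 0): for all λ1, λ2 ∈ (−1/2, 0) with λ1 ≠ λ2 and all s ∈ (0,1), T1( s λ1 + (1 − s) λ2 ) > s · T1(λ1) + (1 − s) · T1(λ2). -/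
/-!
Write `T1 = exp ∘ φ` with `φ(λ) = (-1/2 - 2λ) log(1 + 2λ)`, so that
`T1'' = T1 · (φ'² + φ'')`. With `t = 1/(1 + 2λ) > 1`, the sign condition `φ'² + φ'' < 0` becomes
`(log t + t/2 - 1)² < t + t²/2`. The bound `log t ≤ t - 1` is too weak for this, but
`log t ≤ 3 (t^{1/3} - 1)` reduces it to a polynomial inequality in `t^{1/3}`.
-/

open Real Set Filter Topology

lemma sq_log_add_half_sub_one_lt {t : ℝ} (ht : 1 < t) :
    (log t + t / 2 - 1) ^ 2 < t + t ^ 2 / 2 := by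
  obtain ⟨c, hc, rfl⟩ : ∃ c, 1 < c ∧ c ^ 3 = t := ⟨t ^ ((3 : ℕ)⁻¹ : ℝ),
    one_lt_rpow ht (by norm_num), rpow_inv_natCast_pow (by linarith) (by norm_num)⟩
  have hlog : log (c ^ 3) = 3 * log c := by rw [log_pow]; norm_num
  have hlog_nonneg : 0 ≤ log c := log_nonneg hc.le
  have hlog_le : log c ≤ c - 1 := log_le_sub_one_of_pos (by linarith)
  have hpoly : (c ^ 3 / 2 + 3 * c - 4) ^ 2 < c ^ 3 + (c ^ 3) ^ 2 / 2 := by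
    obtain ⟨d, hd, rfl⟩ : ∃ d, 0 < d ∧ 1 + d = c := ⟨c - 1, by linarith, by ring⟩
    nlinarith [sq_nonneg (d - 1), mul_nonneg hd.le (sq_nonneg (d - 1)),
      mul_nonneg (pow_pos hd 2).le (sq_nonneg (d - 1)),
      mul_nonneg (pow_pos hd 3).le (sq_nonneg (d - 1)), pow_pos hd 4, pow_pos hd 5, pow_pos hd 6]
  rw [hlog]
  rcases le_or_gt 0 (3 * log c + c ^ 3 / 2 - 1) with hA | hA
  · nlinarith
  · nlinarith

lemma strictConcaveOn_of_hasDerivAt2_neg {D : Set ℝ} (hD : Convex ℝ D) (hD_open : IsOpen D)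
    {f f' f'' : ℝ → ℝ} (hf : ∀ x ∈ D, HasDerivAt f (f' x) x)
    (hf' : ∀ x ∈ D, HasDerivAt f' (f'' x) x) (hf'' : ∀ x ∈ D, f'' x < 0) :
    StrictConcaveOn ℝ D f := by
  refine strictConcaveOn_of_deriv2_neg' hD
    (fun x hx ↦ (hf x hx).continuousAt.continuousWithinAt) fun x hx ↦ ?_
  have hderiv : deriv f =ᶠ[𝓝 x] f' :=
    eventually_of_mem (hD_open.mem_nhds hx) fun y hy ↦ (hf y hy).deriv
  rw [Function.iterate_succ_apply', Function.iterate_one, hderiv.deriv_eq, (hf' x hx).deriv]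
  exact hf'' x hx

lemma strictConcaveOn_exp_comp {D : Set ℝ} (hD : Convex ℝ D) (hD_open : IsOpen D)
    {φ φ' φ'' : ℝ → ℝ} (hφ : ∀ x ∈ D, HasDerivAt φ (φ' x) x)
    (hφ' : ∀ x ∈ D, HasDerivAt φ' (φ'' x) x) (hneg : ∀ x ∈ D, φ' x ^ 2 + φ'' x < 0) :
    StrictConcaveOn ℝ D fun x ↦ exp (φ x) := by
  refine strictConcaveOn_of_hasDerivAt2_neg hD hD_open (f' := fun x ↦ exp (φ x) * φ' x)
    (f'' := fun x ↦ exp (φ x) * (φ' x ^ 2 + φ'' x)) (fun x hx ↦ (hφ x hx).exp)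
    (fun x hx ↦ ?_) fun x hx ↦ mul_neg_of_pos_of_neg (exp_pos _) (hneg x hx)
  exact ((hφ x hx).exp.fun_mul (hφ' x hx)).congr_deriv (by ring)

section T1

variable {x : ℝ}

lemma hasDerivAt_T1_exponent (hx : -1 / 2 < x) :
    HasDerivAt (fun y ↦ log (1 + 2 * y) * (-1 / 2 - 2 * y))
      (-2 * log (1 + 2 * x) + 1 / (1 + 2 * x) - 2) x := by
  have hu : 0 < 1 + 2 * x := by linarith
  have hlin : HasDerivAt (fun y : ℝ ↦ 1 + 2 * y) 2 x := by
    simpa using ((hasDerivAt_id x).const_mul 2).const_add 1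
  have hlin' : HasDerivAt (fun y : ℝ ↦ -1 / 2 - 2 * y) (-2) x := by
    simpa using ((hasDerivAt_id x).const_mul 2).const_sub (-1 / 2)
  refine ((hlin.log hu.ne').fun_mul hlin').congr_deriv ?_
  field_simp
  ring

lemma hasDerivAt_T1_exponent_deriv (hx : -1 / 2 < x) :
    HasDerivAt (fun y ↦ -2 * log (1 + 2 * y) + 1 / (1 + 2 * y) - 2)
      (-4 / (1 + 2 * x) - 2 / (1 + 2 * x) ^ 2) x := by
  have hu : 0 < 1 + 2 * x := by linarith
  have hlin : HasDerivAt (fun y : ℝ ↦ 1 + 2 * y) 2 x := by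
    simpa using ((hasDerivAt_id x).const_mul 2).const_add 1
  have hinv : HasDerivAt (fun y : ℝ ↦ 1 / (1 + 2 * y)) (-2 / (1 + 2 * x) ^ 2) x := by
    simpa [one_div] using hlin.fun_inv hu.ne'
  refine ((((hlin.log hu.ne').const_mul (-2)).fun_add hinv).sub_const 2).congr_deriv ?_
  ring

lemma T1_exponent_deriv_sq_add_deriv2_neg (hx : x ∈ Ioo (-(1 : ℝ) / 2) 0) :
    (-2 * log (1 + 2 * x) + 1 / (1 + 2 * x) - 2) ^ 2 + (-4 / (1 + 2 * x) - 2 / (1 + 2 * x) ^ 2)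
      < 0 := by
  have hu : 0 < 1 + 2 * x := by linarith [hx.1]
  obtain ⟨t, ht, hu_eq⟩ : ∃ t, 1 < t ∧ 1 + 2 * x = t⁻¹ :=
    ⟨(1 + 2 * x)⁻¹, one_lt_inv₀ hu |>.2 (by linarith [hx.2]), (inv_inv _).symm⟩
  rw [hu_eq, log_inv, one_div, inv_inv, div_inv_eq_mul, inv_pow, div_inv_eq_mul]
  nlinarith [sq_log_add_half_sub_one_lt ht]

lemma strictConcaveOn_T1 :
    StrictConcaveOn ℝ (Ioo (-(1 : ℝ) / 2) 0)
      fun x ↦ (1 + 2 * x) ^ (-(1 : ℝ) / 2 - 2 * x) := by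
  refine (strictConcaveOn_exp_comp (convex_Ioo _ _) isOpen_Ioo
    (fun x hx ↦ hasDerivAt_T1_exponent (by linarith [hx.1]))
    (fun x hx ↦ hasDerivAt_T1_exponent_deriv (by linarith [hx.1]))
    fun x hx ↦ T1_exponent_deriv_sq_add_deriv2_neg hx).congr fun x hx ↦ ?_
  exact (rpow_def_of_pos (by linarith [hx.1]) _).symm

end T1

theorem stmt5 :
    ∀ l1 ∈ Set.Ioo (-(1 : ℝ)/2) 0, ∀ l2 ∈ Set.Ioo (-(1 : ℝ)/2) 0, l1 ≠ l2 →
      ∀ s ∈ Set.Ioo (0 : ℝ) 1,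
        s * (1 + 2*l1) ^ (-(1 : ℝ)/2 - 2*l1) + (1 - s) * (1 + 2*l2) ^ (-(1 : ℝ)/2 - 2*l2) <
          (1 + 2*(s*l1 + (1 - s)*l2)) ^ (-(1 : ℝ)/2 - 2*(s*l1 + (1 - s)*l2)) := by
  intro l1 hl1 l2 hl2 hne s hs
  simpa using strictConcaveOn_T1.2 hl1 hl2 hne hs.1 (sub_pos.2 hs.2) (by ring)
end

section
/- As λ → ∞, T2(λ) is asymptotically equivalent to (1+λ)^{1/2+λ}: lim_{λ → ∞} [ (1+λ) / ( (1+2λ) sinh(1/(1+2λ)) ) ]^{1/2+λ} / (1+λ)^{1/2+λ} = 1. -/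
/-! Put `x = 1 / (1 + 2λ)`, so that `1/2 + λ = 1 / (2x)` and the ratio equals
`(x / sinh x) ^ (1 / (2x)) = exp (-log (sinh x / x) / (2x))`. Comparing the series of `sinh x`
and `x cosh x` gives `x ≤ sinh x ≤ x cosh x ≤ x exp (x² / 2)`, hence
`0 ≤ log (sinh x / x) ≤ x² / 2`, and the exponent tends to `0` as `x → 0⁺`. -/

open Real Filter Topology

noncomputable def T2 (l : ℝ) : ℝ :=
  ((1 + l) / ((1 + 2 * l) * sinh (1 / (1 + 2 * l)))) ^ ((1 : ℝ) / 2 + l)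

lemma Real.sinh_le_mul_cosh {x : ℝ} (hx : 0 ≤ x) : sinh x ≤ x * cosh x := by
  refine hasSum_le (fun n => ?_) (hasSum_sinh x) ((hasSum_cosh x).mul_left x)
  rw [← mul_div_assoc, ← pow_succ']
  exact div_le_div_of_nonneg_left (by positivity) (by positivity)
    (by exact_mod_cast Nat.factorial_le (by omega))

lemma Real.log_sinh_div_self_mem_Icc {x : ℝ} (hx : 0 < x) :
    log (sinh x / x) ∈ Set.Icc 0 (x ^ 2 / 2) := by
  have hsinh : x ≤ sinh x := self_le_sinh_iff.2 hx.le
  refine ⟨log_nonneg ((one_le_div hx).2 hsinh), ?_⟩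
  rw [← log_exp (x ^ 2 / 2)]
  refine log_le_log (div_pos (hx.trans_le hsinh) hx) ?_
  calc sinh x / x ≤ cosh x := (div_le_iff₀ hx).2 (by rw [mul_comm]; exact sinh_le_mul_cosh hx.le)
    _ ≤ exp (x ^ 2 / 2) := cosh_le_exp_half_sq x

lemma Real.tendsto_log_sinh_div_self_div_self :
    Tendsto (fun x => log (sinh x / x) / x) (𝓝[>] 0) (𝓝 0) := by
  have hupper : Tendsto (fun x : ℝ => x / 2) (𝓝[>] 0) (𝓝 0) := by
    simpa using (tendsto_id.div_const (2 : ℝ)).mono_left (nhdsWithin_le_nhds (a := (0 : ℝ)))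
  refine tendsto_of_tendsto_of_tendsto_of_le_of_le' tendsto_const_nhds hupper ?_ ?_ <;>
    filter_upwards [self_mem_nhdsWithin] with x (hx : 0 < x)
  · exact div_nonneg (log_sinh_div_self_mem_Icc hx).1 hx.le
  · rw [div_le_iff₀ hx]
    linarith [(log_sinh_div_self_mem_Icc hx).2]

lemma tendsto_one_div_one_add_two_mul_atTop :
    Tendsto (fun l : ℝ => 1 / (1 + 2 * l)) atTop (𝓝[>] 0) := by
  simp only [one_div]
  exact tendsto_inv_atTop_nhdsGT_zero.comp
    (tendsto_atTop_add_const_left _ 1 (tendsto_id.const_mul_atTop two_pos))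

lemma T2_div_rpow_eq_exp {l : ℝ} (hl : 0 < 1 + 2 * l) :
    T2 l / (1 + l) ^ ((1 : ℝ) / 2 + l) =
      exp (-(log (sinh (1 / (1 + 2 * l)) / (1 / (1 + 2 * l))) / (1 / (1 + 2 * l))) / 2) := by
  set x := 1 / (1 + 2 * l) with hx_def
  have hx : 0 < x := div_pos one_pos hl
  have hsinh : 0 < sinh x := sinh_pos_iff.2 hx
  have hbase : (1 + 2 * l) * sinh x = sinh x / x := by
    rw [hx_def]; field_simp
  rw [T2, ← div_rpow (div_nonneg (by linarith) (by positivity)) (by linarith),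
    div_div_cancel_left' (by linarith), hbase,
    rpow_def_of_pos (by positivity), log_inv, hx_def]
  congr 1
  field_simp

theorem stmt13 :
    Filter.Tendsto
      (fun l : ℝ =>
        ((1 + l) / ((1 + 2*l) * Real.sinh (1/(1 + 2*l)))) ^ ((1 : ℝ)/2 + l) /
          (1 + l) ^ ((1 : ℝ)/2 + l))
      Filter.atTop (nhds 1) := by
  change Tendsto (fun l => T2 l / (1 + l) ^ ((1 : ℝ) / 2 + l)) atTop (𝓝 1)
  have hexponent := tendsto_log_sinh_div_self_div_self.comp tendsto_one_div_one_add_two_mul_atTop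
  have hlim := (continuous_exp.tendsto _).comp (hexponent.neg.div_const (2 : ℝ))
  rw [neg_zero, zero_div, exp_zero] at hlim
  refine hlim.congr' ?_
  filter_upwards [eventually_gt_atTop 0] with l hl
  exact (T2_div_rpow_eq_exp (by linarith)).symm
end
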